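/- For any real symmetric n×n matrix L with eigenvalues λ_1 ≤ ... ≤ λ_n and any n×n orthogonal matrix X and real symmetric PSD matrix W, the minimum of tr(X^T L X W) over orthogonal X equals Σ_{i=1}^n λ_i μ_{n+1−i}, where μ_1 ≤ ... ≤ μ_n are the eigenvalues of W; in particular the lower bound Σ_i λ_i μ_{n+1−i} is attained. -/

import Mathlib

/-!
With `U = P X Qᵀ`, which is orthogonal, `tr (Xᵀ L X W) = ∑ i j, U i j ^ 2 * l i * m j`. The
matrix `(U i j ^ 2)` is doubly stochastic, so by Birkhoff's theorem this linear functional is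
bounded below by its minimum over permutation matrices, which the rearrangement inequality
identifies as the reversed pairing `∑ i, l i * m i.rev`. Taking `U` to be the reversal
permutation matrix attains it.
-/

open Matrix Finset

namespace Matrix

variable {ι R : Type*}

theorem hadamard_self_permMatrix [DecidableEq ι] [CommRing R] (σ : Equiv.Perm ι) :
    σ.permMatrix R ⊙ σ.permMatrix R = σ.permMatrix R := by
  ext i j
  by_cases h : σ i = j <;> simp [hadamard, PEquiv.toMatrix_apply, Equiv.toPEquiv_apply, h]

section Fintype

variable [Fintype ι]

theorem trace_transpose_mul_conj_mul_conj [CommRing R] (X P Q D E : Matrix ι ι R) :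
    (Xᵀ * (Pᵀ * D * P) * X * (Qᵀ * E * Q)).trace
      = ((P * X * Qᵀ)ᵀ * D * (P * X * Qᵀ) * E).trace := by
  simp only [transpose_mul, transpose_transpose, ← Matrix.mul_assoc]
  rw [trace_mul_comm _ Q]
  simp only [Matrix.mul_assoc]

variable [DecidableEq ι]

theorem transpose_mul_self_of_mul [CommRing R] {A B : Matrix ι ι R}
    (hA : Aᵀ * A = 1) (hB : Bᵀ * B = 1) : (A * B)ᵀ * (A * B) = 1 := by
  rw [transpose_mul, Matrix.mul_assoc, ← Matrix.mul_assoc Aᵀ, hA, Matrix.one_mul, hB]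

theorem transpose_permMatrix_mul_self [CommRing R] (σ : Equiv.Perm ι) :
    (σ.permMatrix R)ᵀ * σ.permMatrix R = 1 := by
  rw [transpose_permMatrix, ← permMatrix_mul, mul_inv_cancel, permMatrix_one]

theorem trace_transpose_mul_diagonal_mul_mul_diagonal [CommRing R] (U : Matrix ι ι R)
    (a b : ι → R) :
    (Uᵀ * diagonal a * U * diagonal b).trace = a ⬝ᵥ ((U ⊙ U) *ᵥ b) := by
  simp only [trace, diag_apply, mul_apply, transpose_apply, diagonal_apply, mul_ite, mul_zero,
    Finset.sum_ite_eq', Finset.mem_univ, if_true, dotProduct, mulVec, hadamard_apply,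
    Finset.sum_mul, Finset.mul_sum]
  rw [Finset.sum_comm]
  refine Finset.sum_congr rfl fun i _ => Finset.sum_congr rfl fun j _ => ?_
  ring

variable [Field R] [LinearOrder R] [IsStrictOrderedRing R]

theorem hadamard_self_mem_doublyStochastic {U : Matrix ι ι R} (hU : Uᵀ * U = 1) :
    U ⊙ U ∈ doublyStochastic R ι := by
  have hU' : U * Uᵀ = 1 := mul_eq_one_comm.mp hU
  refine mem_doublyStochastic_iff_sum.2 ⟨fun i j => mul_self_nonneg _, fun i => ?_, fun j => ?_⟩
  · simpa [mul_apply] using congrFun (congrFun hU' i) i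
  · simpa [mul_apply] using congrFun (congrFun hU j) j

theorem le_dotProduct_mulVec_of_mem_doublyStochastic {a b : ι → R} {c : R}
    (h : ∀ σ : Equiv.Perm ι, c ≤ a ⬝ᵥ (b ∘ σ)) {S : Matrix ι ι R}
    (hS : S ∈ doublyStochastic R ι) : c ≤ a ⬝ᵥ (S *ᵥ b) := by
  have hlin : IsLinearMap R fun S : Matrix ι ι R => a ⬝ᵥ (S *ᵥ b) :=
    ⟨fun S T => by rw [add_mulVec, dotProduct_add],
      fun r S => by rw [smul_mulVec, dotProduct_smul]⟩
  rw [← SetLike.mem_coe, doublyStochastic_eq_convexHull_permMatrix] at hS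
  refine convexHull_min ?_ (convex_halfSpace_ge hlin c) hS
  rintro _ ⟨σ, rfl⟩
  simpa [permMatrix_mulVec] using h σ

end Fintype

end Matrix

theorem Monotone.sum_mul_rev_le_sum_mul_comp_perm {n : ℕ} {R : Type*} [CommRing R]
    [LinearOrder R] [IsStrictOrderedRing R] {f g : Fin n → R} (hf : Monotone f)
    (hg : Monotone g) (σ : Equiv.Perm (Fin n)) :
    ∑ i, f i * g i.rev ≤ ∑ i, f i * g (σ i) := by
  have hanti : Antivary f (g ∘ Fin.rev) := hf.antivary (hg.comp_antitone Fin.rev_anti)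
  simpa using hanti.sum_mul_le_sum_mul_comp_perm (σ := σ.trans Fin.revPerm)

/-- Quadratic-assignment trace bound (Finke–Burkard–Rendl): for real symmetric
matrices `L` and `W` with eigenvalues `l 0 ≤ ... ≤ l (n-1)` and `m 0 ≤ ... ≤ m (n-1)`
(via the spectral theorem with orthogonal `P, Q` and monotone `l, m`), the minimum of
`tr(Xᵀ L X W)` over orthogonal matrices `X` equals `∑ i, l i * m (n+1-i)` (the reversed
pairing); in particular, this lower bound is attained. -/
theorem stmt18 (n : ℕ) (L W : Matrix (Fin n) (Fin n) ℝ)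
    (l m : Fin n → ℝ) (hl : Monotone l) (hm : Monotone m)
    (P Q : Matrix (Fin n) (Fin n) ℝ)
    (hP : Pᵀ * P = 1) (hQ : Qᵀ * Q = 1)
    (hLdiag : L = Pᵀ * Matrix.diagonal l * P)
    (hWdiag : W = Qᵀ * Matrix.diagonal m * Q) :
    IsLeast {t : ℝ | ∃ X : Matrix (Fin n) (Fin n) ℝ,
        Xᵀ * X = 1 ∧ t = (Xᵀ * L * X * W).trace}
      (∑ i : Fin n, l i * m i.rev) := by
  have hPPt : P * Pᵀ = 1 := mul_eq_one_comm.mp hP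
  have hQQt : Q * Qᵀ = 1 := mul_eq_one_comm.mp hQ
  subst hLdiag hWdiag
  set R : Matrix (Fin n) (Fin n) ℝ := Fin.revPerm.permMatrix ℝ
  refine ⟨⟨Pᵀ * R * Q, ?_, ?_⟩, ?_⟩
  · refine transpose_mul_self_of_mul (transpose_mul_self_of_mul ?_ ?_) hQ
    · rwa [transpose_transpose]
    · exact transpose_permMatrix_mul_self _
  · have hU : P * (Pᵀ * R * Q) * Qᵀ = R := by
      simp only [← Matrix.mul_assoc, hPPt, Matrix.one_mul]
      rw [Matrix.mul_assoc, hQQt, Matrix.mul_one]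
    rw [trace_transpose_mul_conj_mul_conj, hU, trace_transpose_mul_diagonal_mul_mul_diagonal,
      hadamard_self_permMatrix, permMatrix_mulVec]
    rfl
  · rintro _ ⟨X, hX, rfl⟩
    rw [trace_transpose_mul_conj_mul_conj, trace_transpose_mul_diagonal_mul_mul_diagonal]
    exact le_dotProduct_mulVec_of_mem_doublyStochastic
      (fun σ => hl.sum_mul_rev_le_sum_mul_comp_perm hm σ)
      (hadamard_self_mem_doublyStochastic (transpose_mul_self_of_mul
        (transpose_mul_self_of_mul hP hX) (by rwa [transpose_transpose])))
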